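/- Let (A, Δ, Δ') be a commutative Hopf brace with antipodes S (for Δ) and T (for Δ'); set ρ(a) = a_{(-1)} ⊗ a_{(0)} = S(a_1) a_{21'} ⊗ a_{22'} and φ(a) = a_{[0]} ⊗ a_{[1]} = (T(a_{1'}))_{(-1)} a_{2'} ⊗ (T(a_{1'}))_{(0)} a_{3'}. Then the linear map c: A ⊗ A → A ⊗ A defined by c(x ⊗ y) = x_{(-1)} y_{[0]} ⊗ x_{(0)} y_{[1]} is an invertible solution of the braid equation: (c ⊗ id)(id ⊗ c)(c ⊗ id) = (id ⊗ c)(c ⊗ id)(id ⊗ c) on A ⊗ A ⊗ A. -/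

import Mathlib

open TensorProduct

noncomputable section

namespace HopfPaper

/-- A Hopf algebra structure (comultiplication `Δ`, counit `ε`, antipode `S`) on a
given `k`-algebra `H`, expressed in terms of `k`-linear maps.  Together with the
algebra structure of `H` this is exactly the data of a Hopf algebra
`(H, m, 1, Δ, ε, S)` over the field `k`. -/
structure HopfStruct (k : Type*) [Field k] (H : Type*) [Ring H] [Algebra k H] where
  /-- the comultiplication -/
  Δ : H →ₗ[k] H ⊗[k] H
  /-- the counit -/
  ε : H →ₗ[k] k
  /-- the antipode -/
  S : H →ₗ[k] H
  coassoc : ∀ h : H,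
    TensorProduct.map (LinearMap.id : H →ₗ[k] H) Δ (Δ h)
      = TensorProduct.assoc k H H H
          (TensorProduct.map Δ (LinearMap.id : H →ₗ[k] H) (Δ h))
  counit_left : ∀ h : H,
    TensorProduct.lid k H (TensorProduct.map ε (LinearMap.id : H →ₗ[k] H) (Δ h)) = h
  counit_right : ∀ h : H,
    TensorProduct.rid k H (TensorProduct.map (LinearMap.id : H →ₗ[k] H) ε (Δ h)) = h
  comul_mul : ∀ a b : H, Δ (a * b) = Δ a * Δ b
  comul_one : Δ 1 = 1
  counit_mul : ∀ a b : H, ε (a * b) = ε a * ε b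
  counit_one : ε 1 = 1
  antipode_left : ∀ h : H,
    LinearMap.mul' k H (TensorProduct.map S (LinearMap.id : H →ₗ[k] H) (Δ h))
      = algebraMap k H (ε h)
  antipode_right : ∀ h : H,
    LinearMap.mul' k H (TensorProduct.map (LinearMap.id : H →ₗ[k] H) S (Δ h))
      = algebraMap k H (ε h)

variable (k : Type*) [Field k]

/-- `m ↦ m ⊗ 1`. -/
def ι₁ (M N : Type*) [Ring M] [Algebra k M] [Ring N] [Algebra k N] :
    M →ₗ[k] M ⊗[k] N :=
  (TensorProduct.mk k M N).flip 1

/-- `n ↦ 1 ⊗ n`. -/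
def ι₂ (M N : Type*) [Ring M] [Algebra k M] [Ring N] [Algebra k N] :
    N →ₗ[k] M ⊗[k] N :=
  TensorProduct.mk k M N 1

/-- multiplication of three factors, `x ⊗ (y ⊗ z) ↦ x * y * z`. -/
def mul₃ (T : Type*) [Ring T] [Algebra k T] : T ⊗[k] (T ⊗[k] T) →ₗ[k] T :=
  (LinearMap.mul' k T).comp
    (TensorProduct.map (LinearMap.id : T →ₗ[k] T) (LinearMap.mul' k T))

/-- multiplication of four factors. -/
def mul₄ (T : Type*) [Ring T] [Algebra k T] :
    T ⊗[k] (T ⊗[k] (T ⊗[k] T)) →ₗ[k] T :=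
  (LinearMap.mul' k T).comp
    (TensorProduct.map (LinearMap.id : T →ₗ[k] T) (mul₃ k T))

/-- The left hand side `h_{1'} ⊗ h_{2'1} ⊗ h_{2'2}` of the Hopf brace compatibility
condition (2.1), i.e. `(id ⊗ Δ) ∘ Δ'`. -/
def braceLHS (H : Type*) [Ring H] [Algebra k H] (Δ Δ' : H →ₗ[k] H ⊗[k] H) :
    H →ₗ[k] H ⊗[k] (H ⊗[k] H) :=
  (TensorProduct.map (LinearMap.id : H →ₗ[k] H) Δ).comp Δ'

/-- The right hand side `h_{11'}S(h_2)h_{31'} ⊗ h_{12'} ⊗ h_{32'}` of the Hopf brace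
compatibility condition (2.1):  it is obtained from the twofold comultiplication
`h ↦ h_1 ⊗ (h_2 ⊗ h_3)` (using `Δ`) by applying `Δ'` to the first and third legs,
`S` to the middle leg, placing the results in the appropriate tensor positions of
`H ⊗ (H ⊗ H)` (filled with `1`s) and multiplying. -/
def braceRHS (H : Type*) [Ring H] [Algebra k H] (Δ Δ' : H →ₗ[k] H ⊗[k] H)
    (S : H →ₗ[k] H) : H →ₗ[k] H ⊗[k] (H ⊗[k] H) :=
  (mul₃ k (H ⊗[k] (H ⊗[k] H))).comp
    ((TensorProduct.map
        ((TensorProduct.map (LinearMap.id : H →ₗ[k] H) (ι₁ k H H)).comp Δ')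
        (TensorProduct.map ((ι₁ k H (H ⊗[k] H)).comp S)
          ((TensorProduct.map (LinearMap.id : H →ₗ[k] H) (ι₂ k H H)).comp Δ'))).comp
      ((TensorProduct.map (LinearMap.id : H →ₗ[k] H) Δ).comp Δ))

/-- A Hopf brace on the `k`-algebra `H` : two Hopf algebra structures sharing the
multiplication and unit of `H`, subject to the compatibility condition (2.1):
`h_{1'} ⊗ h_{2'1} ⊗ h_{2'2} = h_{11'}S(h_2)h_{31'} ⊗ h_{12'} ⊗ h_{32'}`. -/
structure HopfBrace (H : Type*) [Ring H] [Algebra k H] where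
  fst : HopfStruct k H
  snd : HopfStruct k H
  compat : ∀ h : H,
    braceLHS k H fst.Δ snd.Δ h = braceRHS k H fst.Δ snd.Δ fst.S h

/-- The coaction `ρ(h) = S(h_1) h_{21'} ⊗ h_{22'}` of Lemma 2.5. -/
def ρmap (H : Type*) [Ring H] [Algebra k H] (Δ Δ' : H →ₗ[k] H ⊗[k] H)
    (S : H →ₗ[k] H) : H →ₗ[k] H ⊗[k] H :=
  (LinearMap.mul' k (H ⊗[k] H)).comp
    ((TensorProduct.map ((ι₁ k H H).comp S) Δ').comp Δ)

/-- The coaction `φ(a) = (T(a_{1'}))_{(-1)} a_{2'} ⊗ (T(a_{1'}))_{(0)} a_{3'}`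
of Lemma 2.8(2), where `x_{(-1)} ⊗ x_{(0)} = ρ(x)`. -/
def φmap (H : Type*) [Ring H] [Algebra k H] (Δ Δ' : H →ₗ[k] H ⊗[k] H)
    (S T : H →ₗ[k] H) : H →ₗ[k] H ⊗[k] H :=
  (LinearMap.mul' k (H ⊗[k] H)).comp
    ((TensorProduct.map ((ρmap k H Δ Δ' S).comp T)
        (LinearMap.id : H ⊗[k] H →ₗ[k] H ⊗[k] H)).comp
      ((TensorProduct.map (LinearMap.id : H →ₗ[k] H) Δ').comp Δ'))

/-- `ρ : A →ₗ H ⊗ A` is a coassociative counital left coaction of the coalgebra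
`(H, ΔH, εH)`. -/
def LeftCoaction (A H : Type*) [Ring A] [Algebra k A] [Ring H] [Algebra k H]
    (ΔH : H →ₗ[k] H ⊗[k] H) (εH : H →ₗ[k] k) (ρ : A →ₗ[k] H ⊗[k] A) : Prop :=
  (∀ a : A,
    TensorProduct.map (LinearMap.id : H →ₗ[k] H) ρ (ρ a)
      = TensorProduct.assoc k H H A
          (TensorProduct.map ΔH (LinearMap.id : A →ₗ[k] A) (ρ a))) ∧
  (∀ a : A,
    TensorProduct.lid k A (TensorProduct.map εH (LinearMap.id : A →ₗ[k] A) (ρ a)) = a)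

/-- `φ : H →ₗ H ⊗ A` is a coassociative counital right coaction of the coalgebra
`(A, ΔA, εA)`. -/
def RightCoaction (A H : Type*) [Ring A] [Algebra k A] [Ring H] [Algebra k H]
    (ΔA : A →ₗ[k] A ⊗[k] A) (εA : A →ₗ[k] k) (φ : H →ₗ[k] H ⊗[k] A) : Prop :=
  (∀ h : H,
    TensorProduct.map (LinearMap.id : H →ₗ[k] H) ΔA (φ h)
      = TensorProduct.assoc k H A A
          (TensorProduct.map φ (LinearMap.id : A →ₗ[k] A) (φ h))) ∧
  (∀ h : H,
    TensorProduct.rid k H (TensorProduct.map (LinearMap.id : H →ₗ[k] H) εA (φ h)) = h)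

/-- a linear map which is moreover multiplicative and unital. -/
def IsAlgebraMorphism (M N : Type*) [Ring M] [Algebra k M] [Ring N] [Algebra k N]
    (f : M →ₗ[k] N) : Prop :=
  (∀ a b : M, f (a * b) = f a * f b) ∧ f 1 = 1

/-- `a ↦ a_{1(-1)} a_{2(-1)} ⊗ a_{1(0)} ⊗ a_{2(0)}`, the right hand side of the
comodule coalgebra condition. -/
def comodCoalgRHS (A H : Type*) [Ring A] [Algebra k A] [Ring H] [Algebra k H]
    (ΔA : A →ₗ[k] A ⊗[k] A) (ρ : A →ₗ[k] H ⊗[k] A) :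
    A →ₗ[k] H ⊗[k] (A ⊗[k] A) :=
  (LinearMap.mul' k (H ⊗[k] (A ⊗[k] A))).comp
    ((TensorProduct.map
        ((TensorProduct.map (LinearMap.id : H →ₗ[k] H) (ι₁ k A A)).comp ρ)
        ((TensorProduct.map (LinearMap.id : H →ₗ[k] H) (ι₂ k A A)).comp ρ)).comp ΔA)

/-- The two conditions making a left `H`-comodule `(A, ρ)` a comodule coalgebra:
`a_{(-1)} ⊗ Δ(a_{(0)}) = a_{1(-1)} a_{2(-1)} ⊗ a_{1(0)} ⊗ a_{2(0)}` and
`a_{(-1)} ε(a_{(0)}) = ε(a) 1`. -/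
def IsComodCoalg (A H : Type*) [Ring A] [Algebra k A] [Ring H] [Algebra k H]
    (ΔA : A →ₗ[k] A ⊗[k] A) (εA : A →ₗ[k] k) (ρ : A →ₗ[k] H ⊗[k] A) : Prop :=
  (∀ a : A,
    TensorProduct.map (LinearMap.id : H →ₗ[k] H) ΔA (ρ a)
      = comodCoalgRHS k A H ΔA ρ a) ∧
  (∀ a : A,
    TensorProduct.rid k H (TensorProduct.map (LinearMap.id : H →ₗ[k] H) εA (ρ a))
      = algebraMap k H (εA a))

/-- `a ↦ a_{1(-1)} a_{2(-1)[0]} ⊗ a_{1(0)} a_{2(-1)[1]} ⊗ a_{2(0)}`, the right hand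
side of (HM2). -/
def HM2RHS (A H : Type*) [Ring A] [Algebra k A] [Ring H] [Algebra k H]
    (ΔA : A →ₗ[k] A ⊗[k] A) (ρ : A →ₗ[k] H ⊗[k] A) (φ : H →ₗ[k] H ⊗[k] A) :
    A →ₗ[k] H ⊗[k] (A ⊗[k] A) :=
  (LinearMap.mul' k (H ⊗[k] (A ⊗[k] A))).comp
    ((TensorProduct.map
        ((TensorProduct.map (LinearMap.id : H →ₗ[k] H) (ι₁ k A A)).comp ρ)
        ((TensorProduct.assoc k H A A).toLinearMap.comp
          ((TensorProduct.map φ (LinearMap.id : A →ₗ[k] A)).comp ρ))).comp ΔA)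

/-- `h ↦ h_{1[0]} ⊗ h_{1[1](-1)} h_{2[0]} ⊗ h_{1[1](0)} h_{2[1]}`, the right hand
side of (HM3). -/
def HM3RHS (A H : Type*) [Ring A] [Algebra k A] [Ring H] [Algebra k H]
    (ΔH : H →ₗ[k] H ⊗[k] H) (ρ : A →ₗ[k] H ⊗[k] A) (φ : H →ₗ[k] H ⊗[k] A) :
    H →ₗ[k] H ⊗[k] (H ⊗[k] A) :=
  (LinearMap.mul' k (H ⊗[k] (H ⊗[k] A))).comp
    ((TensorProduct.map
        ((TensorProduct.map (LinearMap.id : H →ₗ[k] H) ρ).comp φ)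
        ((ι₂ k H (H ⊗[k] A)).comp φ)).comp ΔH)

/-- A Hopf matched pair `(A, H)` (Definition 3.1): `ρ` makes `A` a left
`H`-comodule algebra, `φ` makes `H` a right `A`-comodule algebra, and the
compatibility conditions (HM1)–(HM4) hold. -/
def IsHopfMatchedPair (A H : Type*) [Ring A] [Algebra k A] [Ring H] [Algebra k H]
    (ΔA : A →ₗ[k] A ⊗[k] A) (εA : A →ₗ[k] k)
    (ΔH : H →ₗ[k] H ⊗[k] H) (εH : H →ₗ[k] k)
    (ρ : A →ₗ[k] H ⊗[k] A) (φ : H →ₗ[k] H ⊗[k] A) : Prop :=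
  LeftCoaction k A H ΔH εH ρ ∧
  IsAlgebraMorphism k A (H ⊗[k] A) ρ ∧
  RightCoaction k A H ΔA εA φ ∧
  IsAlgebraMorphism k H (H ⊗[k] A) φ ∧
  -- (HM1)
  (∀ a : A,
    TensorProduct.rid k H (TensorProduct.map (LinearMap.id : H →ₗ[k] H) εA (ρ a))
      = algebraMap k H (εA a)) ∧
  (∀ h : H,
    TensorProduct.lid k A (TensorProduct.map εH (LinearMap.id : A →ₗ[k] A) (φ h))
      = algebraMap k A (εH h)) ∧
  -- (HM2)
  (∀ a : A,
    TensorProduct.map (LinearMap.id : H →ₗ[k] H) ΔA (ρ a) = HM2RHS k A H ΔA ρ φ a) ∧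
  -- (HM3)
  (∀ h : H,
    TensorProduct.assoc k H H A
        (TensorProduct.map ΔH (LinearMap.id : A →ₗ[k] A) (φ h))
      = HM3RHS k A H ΔH ρ φ h) ∧
  -- (HM4)
  (∀ (a : A) (h : H), φ h * ρ a = ρ a * φ h)

/-- Equation (3.2): `Δ(a) = a_{1'} T(a_{2'(-1)}) ⊗ a_{2'(0)}`. -/
def Δfromρ (A : Type*) [Ring A] [Algebra k A] (Δ' : A →ₗ[k] A ⊗[k] A)
    (T : A →ₗ[k] A) (ρ : A →ₗ[k] A ⊗[k] A) : A →ₗ[k] A ⊗[k] A :=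
  (LinearMap.mul' k (A ⊗[k] A)).comp
    ((TensorProduct.map (ι₁ k A A)
        ((TensorProduct.map T (LinearMap.id : A →ₗ[k] A)).comp ρ)).comp Δ')

/-- Equation (3.3): `S(a) = a_{(-1)} T(a_{(0)})`. -/
def Sfromρ (A : Type*) [Ring A] [Algebra k A] (T : A →ₗ[k] A)
    (ρ : A →ₗ[k] A ⊗[k] A) : A →ₗ[k] A :=
  (LinearMap.mul' k A).comp
    ((TensorProduct.map (LinearMap.id : A →ₗ[k] A) T).comp ρ)

/-- The comultiplication `Δ_R(h) = R · Δ(h) · R⁻¹` obtained by conjugating `Δ` with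
an invertible element `R ∈ H ⊗ H`. -/
def conjComul (H : Type*) [Ring H] [Algebra k H] (R Rinv : H ⊗[k] H)
    (Δ : H →ₗ[k] H ⊗[k] H) : H →ₗ[k] H ⊗[k] H :=
  (LinearMap.mulLeft k R).comp ((LinearMap.mulRight k Rinv).comp Δ)

/-- The braiding candidate `c(x ⊗ y) = x_{(-1)} y_{[0]} ⊗ x_{(0)} y_{[1]}` of
Proposition 2.9, i.e. `c = mult ∘ (ρ ⊗ φ)`. -/
def cmap (A : Type*) [Ring A] [Algebra k A] (Δ Δ' : A →ₗ[k] A ⊗[k] A)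
    (S T : A →ₗ[k] A) : A ⊗[k] A →ₗ[k] A ⊗[k] A :=
  (LinearMap.mul' k (A ⊗[k] A)).comp
    (TensorProduct.map (ρmap k A Δ Δ' S) (φmap k A Δ Δ' S T))

/-- `γ(x ⊗ y) = x y_{(-1)} ⊗ y_{(0)}` for a coaction `ρ(y) = y_{(-1)} ⊗ y_{(0)}`. -/
def γmap (A : Type*) [Ring A] [Algebra k A] (ρ : A →ₗ[k] A ⊗[k] A) :
    A ⊗[k] A →ₗ[k] A ⊗[k] A :=
  (LinearMap.mul' k (A ⊗[k] A)).comp (TensorProduct.map (ι₁ k A A) ρ)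

/-- `σ(x ⊗ y) = y_2 ⊗ x S(y_1) y_3`. -/
def σmap (A : Type*) [Ring A] [Algebra k A] (Δ : A →ₗ[k] A ⊗[k] A)
    (S : A →ₗ[k] A) : A ⊗[k] A →ₗ[k] A ⊗[k] A :=
  (mul₄ k (A ⊗[k] A)).comp
    ((TensorProduct.map (ι₂ k A A)
        (TensorProduct.map ((ι₂ k A A).comp S)
          (TensorProduct.map (ι₁ k A A) (ι₂ k A A)))).comp
      (TensorProduct.map (LinearMap.id : A →ₗ[k] A)
        ((TensorProduct.map (LinearMap.id : A →ₗ[k] A) Δ).comp Δ)))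

/-- The usual tensor product comultiplication `Δ̂` on `A ⊗ H`:
`a ⊗ h ↦ (a_1 ⊗ h_1) ⊗ (a_2 ⊗ h_2)`. -/
def hatΔ (A H : Type*) [Ring A] [Algebra k A] [Ring H] [Algebra k H]
    (ΔA : A →ₗ[k] A ⊗[k] A) (ΔH : H →ₗ[k] H ⊗[k] H) :
    A ⊗[k] H →ₗ[k] (A ⊗[k] H) ⊗[k] (A ⊗[k] H) :=
  (TensorProduct.tensorTensorTensorComm k A A H H).toLinearMap.comp
    (TensorProduct.map ΔA ΔH)

/-- The bicrossed coproduct comultiplication on `A ⊗ H`: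
`Δ̃(a ⊗ h) = a_1 ⊗ a_{2(-1)} h_{1[0]} ⊗ a_{2(0)} h_{1[1]} ⊗ h_2`. -/
def bicrossΔ (A H : Type*) [Ring A] [Algebra k A] [Ring H] [Algebra k H]
    (ΔA : A →ₗ[k] A ⊗[k] A) (ΔH : H →ₗ[k] H ⊗[k] H)
    (ρ : A →ₗ[k] H ⊗[k] A) (φ : H →ₗ[k] H ⊗[k] A) :
    A ⊗[k] H →ₗ[k] (A ⊗[k] H) ⊗[k] (A ⊗[k] H) :=
  (LinearMap.mul' k ((A ⊗[k] H) ⊗[k] (A ⊗[k] H))).comp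
    (TensorProduct.map
      -- a ↦ (a_1 ⊗ a_{2(-1)}) ⊗ (a_{2(0)} ⊗ 1)
      ((TensorProduct.map (LinearMap.id : A ⊗[k] H →ₗ[k] A ⊗[k] H) (ι₁ k A H)).comp
        ((TensorProduct.assoc k A H A).symm.toLinearMap.comp
          ((TensorProduct.map (LinearMap.id : A →ₗ[k] A) ρ).comp ΔA)))
      -- h ↦ (1 ⊗ h_{1[0]}) ⊗ (h_{1[1]} ⊗ h_2)
      ((TensorProduct.map (ι₂ k A H) (LinearMap.id : A ⊗[k] H →ₗ[k] A ⊗[k] H)).comp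
        ((TensorProduct.assoc k H A H).toLinearMap.comp
          ((TensorProduct.map φ (LinearMap.id : H →ₗ[k] H)).comp ΔH))))

/-- The antipode of the bicrossed coproduct:
`S̃(a ⊗ h) = S_A(h_{[1]}) S_A(a_{(0)}) ⊗ S_H(h_{[0]}) S_H(a_{(-1)})`. -/
def bicrossS (A H : Type*) [Ring A] [Algebra k A] [Ring H] [Algebra k H]
    (SA : A →ₗ[k] A) (SH : H →ₗ[k] H)
    (ρ : A →ₗ[k] H ⊗[k] A) (φ : H →ₗ[k] H ⊗[k] A) :
    A ⊗[k] H →ₗ[k] A ⊗[k] H :=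
  (LinearMap.mul' k (A ⊗[k] H)).comp
    ((TensorProduct.map
        ((TensorProduct.map SA SH).comp ((TensorProduct.comm k H A).toLinearMap.comp φ))
        ((TensorProduct.map SA SH).comp ((TensorProduct.comm k H A).toLinearMap.comp ρ))).comp
      (TensorProduct.comm k A H).toLinearMap)

/-- The left hand side `h_{[0]} ⊗ h_{[1]1} ⊗ h_{[1]2}` of equation (4.1), where the
`A`-leg is comultiplied with `Δ'`. -/
def eq41LHS (A H : Type*) [Ring A] [Algebra k A] [Ring H] [Algebra k H]
    (Δ'A : A →ₗ[k] A ⊗[k] A) (φ : H →ₗ[k] H ⊗[k] A) :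
    H →ₗ[k] H ⊗[k] (A ⊗[k] A) :=
  (TensorProduct.map (LinearMap.id : H →ₗ[k] H) Δ'A).comp φ

/-- The right hand side `h_{1[0]} S(h_2) h_{3[0]} ⊗ h_{1[1]} ⊗ h_{3[1]}` of
equation (4.1). -/
def eq41RHS (A H : Type*) [Ring A] [Algebra k A] [Ring H] [Algebra k H]
    (ΔH : H →ₗ[k] H ⊗[k] H) (SH : H →ₗ[k] H) (φ : H →ₗ[k] H ⊗[k] A) :
    H →ₗ[k] H ⊗[k] (A ⊗[k] A) :=
  (mul₃ k (H ⊗[k] (A ⊗[k] A))).comp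
    ((TensorProduct.map
        ((TensorProduct.map (LinearMap.id : H →ₗ[k] H) (ι₁ k A A)).comp φ)
        (TensorProduct.map ((ι₁ k H (A ⊗[k] A)).comp SH)
          ((TensorProduct.map (LinearMap.id : H →ₗ[k] H) (ι₂ k A A)).comp φ))).comp
      ((TensorProduct.map (LinearMap.id : H →ₗ[k] H) ΔH).comp ΔH))

/-- `x ↦ x_{11'} S(x_2) ⊗ x_{12'} ⊗ 1 ∈ H ⊗ (H ⊗ A)`, an auxiliary map for
equations (4.2) and (4.3). -/
def LHmap (A H : Type*) [Ring A] [Algebra k A] [Ring H] [Algebra k H]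
    (ΔH Δ'H : H →ₗ[k] H ⊗[k] H) (SH : H →ₗ[k] H) :
    H →ₗ[k] H ⊗[k] (H ⊗[k] A) :=
  (LinearMap.mul' k (H ⊗[k] (H ⊗[k] A))).comp
    ((TensorProduct.map
        ((TensorProduct.map (LinearMap.id : H →ₗ[k] H) (ι₁ k H A)).comp Δ'H)
        ((ι₁ k H (H ⊗[k] A)).comp SH)).comp ΔH)

/-- The right hand side
`a_{(-1)11'} S(a_{(-1)2}) a_{(0)(-1)'} ⊗ a_{(-1)12'} ⊗ a_{(0)(0)'}` of
equation (4.2). -/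
def eq42RHS (A H : Type*) [Ring A] [Algebra k A] [Ring H] [Algebra k H]
    (ΔH Δ'H : H →ₗ[k] H ⊗[k] H) (SH : H →ₗ[k] H)
    (ρ ρ' : A →ₗ[k] H ⊗[k] A) :
    A →ₗ[k] H ⊗[k] (H ⊗[k] A) :=
  (LinearMap.mul' k (H ⊗[k] (H ⊗[k] A))).comp
    ((TensorProduct.map (LHmap k A H ΔH Δ'H SH)
        ((TensorProduct.map (LinearMap.id : H →ₗ[k] H) (ι₂ k H A)).comp ρ')).comp ρ)

/-- The right hand side
`h_{1[0]11'} S(h_{1[0]2}) h_{1[1](-1)'} h_2 ⊗ h_{1[0]12'} ⊗ h_{1[1](0)'}` of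
equation (4.3). -/
def eq43RHS (A H : Type*) [Ring A] [Algebra k A] [Ring H] [Algebra k H]
    (ΔH Δ'H : H →ₗ[k] H ⊗[k] H) (SH : H →ₗ[k] H)
    (ρ' : A →ₗ[k] H ⊗[k] A) (φ : H →ₗ[k] H ⊗[k] A) :
    H →ₗ[k] H ⊗[k] (H ⊗[k] A) :=
  (LinearMap.mul' k (H ⊗[k] (H ⊗[k] A))).comp
    ((TensorProduct.map
        ((LinearMap.mul' k (H ⊗[k] (H ⊗[k] A))).comp
          ((TensorProduct.map (LHmap k A H ΔH Δ'H SH)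
              ((TensorProduct.map (LinearMap.id : H →ₗ[k] H) (ι₂ k H A)).comp ρ')).comp φ))
        (ι₁ k H (H ⊗[k] A))).comp ΔH)

/-!
For commutative `A` and a commutative `k`-algebra `R`, the algebra maps `A → R` form a group
`G(R)` under the convolution `⋆` of `Δ` (with inverse `f ∘ S`), and a second group under the
convolution `⋆'` of `Δ'`. Evaluating the compatibility condition (2.1) on `f ⊗ g ⊗ h` gives
`f ⋆' (g ⋆ h) = (f ⋆' g) ⋆ (f ∘ S) ⋆ (f ⋆' h)`: the two groups form a skew brace, so
`r(a, b) = (λ_a(b), σ_b(a))` is a bijective solution of the braid equation on `G(R)`, natural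
in `R`. The map `c` is the algebra endomorphism of `A ⊗ A` whose restrictions to the two tensor
factors are the two components of `r` at the generic pair `(x ↦ x ⊗ 1, x ↦ 1 ⊗ x)`. Hence
precomposition with `c` acts on `Hom(A ⊗ A, R) = G(R)²` as `r`, and precomposition with
`c ⊗ id` and `id ⊗ c` acts on `Hom(A ⊗ A ⊗ A, R) = G(R)³` as `r × id` and `id × r`; by Yoneda,
`c` is invertible and satisfies the braid equation because `r` does.
-/

-- The identity of `∘` is a separate field: `circOne_eq_one` forces it to be `1`.
structure SkewBrace (G : Type*) [Group G] where
  circ : G → G → G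
  circOne : G
  circInv : G → G
  circ_assoc (a b c : G) : circ (circ a b) c = circ a (circ b c)
  circOne_circ (a : G) : circ circOne a = a
  circ_circOne (a : G) : circ a circOne = a
  circInv_circ (a : G) : circ (circInv a) a = circOne
  circ_circInv (a : G) : circ a (circInv a) = circOne
  circ_mul (a b c : G) : circ a (b * c) = circ a b * (a⁻¹ * circ a c)

namespace SkewBrace

variable {G : Type*} [Group G] (B : SkewBrace G)

theorem circOne_eq_one : B.circOne = 1 := by
  have h := B.circ_mul B.circOne 1 1
  rw [mul_one, B.circOne_circ, one_mul, mul_one] at h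
  exact inv_eq_one.mp h.symm

@[simp] theorem one_circ (a : G) : B.circ 1 a = a := B.circOne_eq_one ▸ B.circOne_circ a

@[simp] theorem circ_one (a : G) : B.circ a 1 = a := B.circOne_eq_one ▸ B.circ_circOne a

@[simp] theorem circInv_circ_self (a : G) : B.circ (B.circInv a) a = 1 :=
  B.circOne_eq_one ▸ B.circInv_circ a

@[simp] theorem circ_circInv_self (a : G) : B.circ a (B.circInv a) = 1 :=
  B.circOne_eq_one ▸ B.circ_circInv a

theorem circ_circInv_circ (a b : G) : B.circ a (B.circ (B.circInv a) b) = b := by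
  rw [← B.circ_assoc, circ_circInv_self, one_circ]

theorem circInv_circ_circ (a b : G) : B.circ (B.circInv a) (B.circ a b) = b := by
  rw [← B.circ_assoc, circInv_circ_self, one_circ]

theorem circ_left_cancel {a b c : G} (h : B.circ a b = B.circ a c) : b = c := by
  rw [← B.circInv_circ_circ a b, h, circInv_circ_circ]

theorem circ_right_cancel {a b c : G} (h : B.circ a c = B.circ b c) : a = b := by
  rw [← B.circ_circOne a, ← B.circ_circOne b, ← B.circ_circInv c, ← B.circ_assoc, h,
    B.circ_assoc]

theorem circInv_circ_rev (a b : G) :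
    B.circInv (B.circ a b) = B.circ (B.circInv b) (B.circInv a) :=
  B.circ_left_cancel (a := B.circ a b) <| by
    rw [circ_circInv_self, B.circ_assoc, B.circ_circInv_circ, circ_circInv_self]

def lam (a b : G) : G := a⁻¹ * B.circ a b

theorem circ_eq_mul_lam (a b : G) : B.circ a b = a * B.lam a b := by
  rw [lam, mul_inv_cancel_left]

theorem lam_mul (a b c : G) : B.lam a (b * c) = B.lam a b * B.lam a c := by
  simp only [lam, B.circ_mul, mul_assoc]

theorem lam_one (a : G) : B.lam a 1 = 1 := by
  rw [lam, circ_one, inv_mul_cancel]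

theorem lam_inv (a b : G) : B.lam a b⁻¹ = (B.lam a b)⁻¹ :=
  eq_inv_of_mul_eq_one_right <| by rw [← B.lam_mul, mul_inv_cancel, B.lam_one]

theorem lam_circ (a b c : G) : B.lam (B.circ a b) c = B.lam a (B.lam b c) := by
  rw [show B.lam b c = b⁻¹ * B.circ b c from rfl, B.lam_mul, B.lam_inv]
  simp only [lam, B.circ_assoc]
  group

def sigma (a b : G) : G := B.circ (B.circInv (B.lam a b)) (B.circ a b)

theorem circ_lam_sigma (a b : G) : B.circ (B.lam a b) (B.sigma a b) = B.circ a b :=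
  B.circ_circInv_circ _ _

theorem circ_lam_lam_sigma (a b c : G) :
    B.circ (B.lam a b) (B.lam (B.sigma a b) c) = B.lam a (B.circ b c) := by
  rw [B.circ_eq_mul_lam (B.lam a b), ← B.lam_circ, circ_lam_sigma, B.lam_circ, ← B.lam_mul,
    ← B.circ_eq_mul_lam]

theorem sigma_sigma (a b c : G) : B.sigma (B.sigma a b) c = B.sigma a (B.circ b c) := by
  have h : B.circ (B.sigma a b) c = B.circ (B.circInv (B.lam a b)) (B.circ a (B.circ b c)) := by
    rw [sigma, B.circ_assoc, B.circ_assoc]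
  rw [sigma, h, ← B.circ_assoc, ← B.circInv_circ_rev, circ_lam_lam_sigma]
  rfl

def solution : G × G ≃ G × G where
  toFun x := (B.lam x.1 x.2, B.sigma x.1 x.2)
  invFun y :=
    (B.circ y.1 y.2 * y.1⁻¹, B.circ (B.circInv (B.circ y.1 y.2 * y.1⁻¹)) (B.circ y.1 y.2))
  left_inv := fun ⟨a, b⟩ => by
    have hu : B.circ a b * (B.lam a b)⁻¹ = a := by rw [lam]; group
    simp only [circ_lam_sigma, hu, circInv_circ_circ]
  right_inv := fun ⟨p, q⟩ => by
    have hp : B.lam (B.circ p q * p⁻¹)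
        (B.circ (B.circInv (B.circ p q * p⁻¹)) (B.circ p q)) = p := by
      rw [lam, circ_circInv_circ]; group
    simp only [sigma, hp, circ_circInv_circ, circInv_circ_circ]

def solutionLeft (x : (G × G) × G) : (G × G) × G := (B.solution x.1, x.2)

def solutionRight (x : (G × G) × G) : (G × G) × G :=
  ((x.1.1, (B.solution (x.1.2, x.2)).1), (B.solution (x.1.2, x.2)).2)

theorem solution_braid (x : (G × G) × G) :
    B.solutionLeft (B.solutionRight (B.solutionLeft x)) =
      B.solutionRight (B.solutionLeft (B.solutionRight x)) := by
  obtain ⟨⟨a, b⟩, c⟩ := x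
  have first : B.lam (B.lam a b) (B.lam (B.sigma a b) c) = B.lam a (B.lam b c) := by
    rw [← B.lam_circ, circ_lam_sigma, B.lam_circ]
  have third : B.sigma (B.sigma a b) c = B.sigma (B.sigma a (B.lam b c)) (B.sigma b c) := by
    rw [B.sigma_sigma, B.sigma_sigma, circ_lam_sigma]
  -- Both sides preserve the `∘`-product of the triple, so the middle entries agree as well.
  have product : B.circ (B.lam (B.lam a b) (B.lam (B.sigma a b) c))
        (B.circ (B.sigma (B.lam a b) (B.lam (B.sigma a b) c)) (B.sigma (B.sigma a b) c)) =
      B.circ (B.lam a (B.lam b c))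
        (B.circ (B.lam (B.sigma a (B.lam b c)) (B.sigma b c))
          (B.sigma (B.sigma a (B.lam b c)) (B.sigma b c))) := by
    rw [← B.circ_assoc, circ_lam_sigma, B.circ_assoc, circ_lam_sigma, ← B.circ_assoc,
      circ_lam_sigma, circ_lam_sigma, ← B.circ_assoc, circ_lam_sigma, B.circ_assoc,
      B.circ_assoc, circ_lam_sigma]
  rw [first, third] at product
  have second := B.circ_right_cancel (B.circ_left_cancel product)
  simp only [solutionLeft, solutionRight, solution, Equiv.coe_fn_mk, first, second, third]

variable {G' : Type*} [Group G'] {B' : SkewBrace G'}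

theorem map_circInv (f : G →* G') (hf : ∀ a b, f (B.circ a b) = B'.circ (f a) (f b)) (a : G) :
    f (B.circInv a) = B'.circInv (f a) :=
  B'.circ_left_cancel (a := f a) <| by rw [← hf, circ_circInv_self, circ_circInv_self, map_one]

theorem map_lam (f : G →* G') (hf : ∀ a b, f (B.circ a b) = B'.circ (f a) (f b)) (a b : G) :
    f (B.lam a b) = B'.lam (f a) (f b) := by
  rw [lam, lam, map_mul, map_inv, hf]

theorem map_sigma (f : G →* G') (hf : ∀ a b, f (B.circ a b) = B'.circ (f a) (f b)) (a b : G) :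
    f (B.sigma a b) = B'.sigma (f a) (f b) := by
  rw [sigma, sigma, hf, hf, B.map_circInv f hf, B.map_lam f hf]

theorem map_solution (f : G →* G') (hf : ∀ a b, f (B.circ a b) = B'.circ (f a) (f b))
    (x : G × G) : Prod.map f f (B.solution x) = B'.solution (Prod.map f f x) :=
  Prod.ext (B.map_lam f hf _ _) (B.map_sigma f hf _ _)

theorem map_solution_symm (f : G →* G') (hf : ∀ a b, f (B.circ a b) = B'.circ (f a) (f b))
    (x : G × G) : Prod.map f f (B.solution.symm x) = B'.solution.symm (Prod.map f f x) := by
  rw [Equiv.eq_symm_apply, ← B.map_solution f hf, Equiv.apply_symm_apply]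

end SkewBrace

open Algebra.TensorProduct (lmul' productMap includeLeft includeRight)

section

variable {k M N P R : Type*} [Field k] [Ring M] [Algebra k M] [Ring N] [Algebra k N]
  [Ring P] [Algebra k P] [CommRing R] [Algebra k R]

@[simp] theorem ι₁_apply (m : M) : ι₁ k M N m = m ⊗ₜ 1 := rfl

@[simp] theorem ι₂_apply (n : N) : ι₂ k M N n = 1 ⊗ₜ n := rfl

theorem productMap_map_ι₁ (f : M →ₐ[k] R) (g : N →ₐ[k] R) (h : P →ₐ[k] R) (z : M ⊗[k] N) :
    productMap f (productMap g h) (TensorProduct.map LinearMap.id (ι₁ k N P) z) =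
      productMap f g z := by
  induction z using TensorProduct.induction_on with
  | zero => simp
  | tmul a b => simp
  | add _ _ h₁ h₂ => simp only [map_add, h₁, h₂]

theorem productMap_map_ι₂ (f : M →ₐ[k] R) (g : N →ₐ[k] R) (h : P →ₐ[k] R) (z : M ⊗[k] P) :
    productMap f (productMap g h) (TensorProduct.map LinearMap.id (ι₂ k N P) z) =
      productMap f h z := by
  induction z using TensorProduct.induction_on with
  | zero => simp
  | tmul a b => simp
  | add _ _ h₁ h₂ => simp only [map_add, h₁, h₂]

end

namespace HopfStruct

section Ring

variable {k A R R' : Type*} [Field k] [Ring A] [Algebra k A] [CommRing R] [Algebra k R]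
  [CommRing R'] [Algebra k R'] (H : HopfStruct k A)

abbrev toHopfAlgebra : HopfAlgebra k A where
  comul := H.Δ
  counit := H.ε
  coassoc := by ext x; exact (H.coassoc x).symm
  rTensor_counit_comp_comul := by
    ext x; exact (TensorProduct.lid k A).injective ((H.counit_left x).trans (by simp))
  lTensor_counit_comp_comul := by
    ext x; exact (TensorProduct.rid k A).injective ((H.counit_right x).trans (by simp))
  counit_one := H.counit_one
  mul_compr₂_counit := by ext a b; exact H.counit_mul a b
  comul_one := H.comul_one
  mul_compr₂_comul := by ext a b; exact H.comul_mul a b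
  antipode := H.S
  mul_antipode_rTensor_comul := by ext x; exact H.antipode_left x
  mul_antipode_lTensor_comul := by ext x; exact H.antipode_right x

theorem antipode_one : H.S 1 = 1 :=
  let := H.toHopfAlgebra; HopfAlgebra.antipode_one

def comulAlgHom : A →ₐ[k] A ⊗[k] A := .ofLinearMap H.Δ H.comul_one H.comul_mul

def counitAlgHom : A →ₐ[k] k := .ofLinearMap H.ε H.counit_one H.counit_mul

def conv (f g : A →ₐ[k] R) : A →ₐ[k] R :=
  (lmul' k).comp ((Algebra.TensorProduct.map f g).comp H.comulAlgHom)

def convOne : A →ₐ[k] R := (Algebra.ofId k R).comp H.counitAlgHom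

theorem conv_apply (f g : A →ₐ[k] R) (x : A) : H.conv f g x = productMap f g (H.Δ x) := by
  rw [Algebra.TensorProduct.productMap_eq_comp_map]; rfl

open WithConv in
theorem conv_assoc (f g h : A →ₐ[k] R) : H.conv (H.conv f g) h = H.conv f (H.conv g h) :=
  let := H.toHopfAlgebra
  congrArg ofConv (mul_assoc (toConv f) (toConv g) (toConv h))

open WithConv in
theorem convOne_conv (f : A →ₐ[k] R) : H.conv H.convOne f = f :=
  let := H.toHopfAlgebra
  congrArg ofConv (one_mul (toConv f))

open WithConv in
theorem conv_convOne (f : A →ₐ[k] R) : H.conv f H.convOne = f :=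
  let := H.toHopfAlgebra
  congrArg ofConv (mul_one (toConv f))

open WithConv in
theorem comp_conv (N : R →ₐ[k] R') (f g : A →ₐ[k] R) :
    N.comp (H.conv f g) = H.conv (N.comp f) (N.comp g) :=
  let := H.toHopfAlgebra
  AlgHom.comp_convMul_distrib N (toConv f) (toConv g)

theorem comp_convOne (N : R →ₐ[k] R') : N.comp (H.convOne (R := R)) = H.convOne :=
  AlgHom.ext fun _ => N.commutes _

end Ring

variable {k A R R' : Type*} [Field k] [CommRing A] [Algebra k A] [CommRing R] [Algebra k R]
  [CommRing R'] [Algebra k R'] (H : HopfStruct k A)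

theorem conv_includeLeft_includeRight : H.conv includeLeft includeRight = H.comulAlgHom := by
  ext x
  have h : productMap (includeLeft : A →ₐ[k] A ⊗[k] A) includeRight = AlgHom.id k _ :=
    Algebra.TensorProduct.ext' fun a b => by simp
  rw [conv_apply, h]
  rfl

theorem antipode_mul (a b : A) : H.S (a * b) = H.S a * H.S b :=
  let := H.toHopfAlgebra; HopfAlgebra.antipode_mul_distrib a b

def antipodeAlgHom : A →ₐ[k] A := .ofLinearMap H.S H.antipode_one H.antipode_mul

@[simp] theorem antipodeAlgHom_apply (x : A) : H.antipodeAlgHom x = H.S x := rfl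

theorem antipode_conv (f : A →ₐ[k] R) : H.conv (f.comp H.antipodeAlgHom) f = H.convOne := by
  ext x
  have h := congr($(AlgHom.comp_mul' f) (TensorProduct.map H.S LinearMap.id (H.Δ x)))
  rw [LinearMap.comp_apply, LinearMap.comp_apply, TensorProduct.map_map, H.antipode_left] at h
  exact h.symm.trans (f.commutes _)

theorem conv_antipode (f : A →ₐ[k] R) : H.conv f (f.comp H.antipodeAlgHom) = H.convOne := by
  ext x
  have h := congr($(AlgHom.comp_mul' f) (TensorProduct.map LinearMap.id H.S (H.Δ x)))
  rw [LinearMap.comp_apply, LinearMap.comp_apply, TensorProduct.map_map, H.antipode_right] at h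
  exact h.symm.trans (f.commutes _)

-- Indexed by `H` only so that its convolution group can be an instance.
@[ext] structure Points (_ : HopfStruct k A) (R : Type*) [CommRing R] [Algebra k R] where
  toAlgHom : A →ₐ[k] R

instance : Group (H.Points R) where
  mul f g := ⟨H.conv f.toAlgHom g.toAlgHom⟩
  one := ⟨H.convOne⟩
  inv f := ⟨f.toAlgHom.comp H.antipodeAlgHom⟩
  mul_assoc _ _ _ := Points.ext (H.conv_assoc _ _ _)
  one_mul _ := Points.ext (H.convOne_conv _)
  mul_one _ := Points.ext (H.conv_convOne _)
  inv_mul_cancel _ := Points.ext (H.antipode_conv _)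

@[simp] theorem Points.mul_toAlgHom (f g : H.Points R) :
    (f * g).toAlgHom = H.conv f.toAlgHom g.toAlgHom := rfl

@[simp] theorem Points.inv_toAlgHom (f : H.Points R) :
    f⁻¹.toAlgHom = f.toAlgHom.comp H.antipodeAlgHom := rfl

variable {H} in
def Points.map (N : R →ₐ[k] R') : H.Points R →* H.Points R' where
  toFun f := ⟨N.comp f.toAlgHom⟩
  map_one' := Points.ext (H.comp_convOne N)
  map_mul' _ _ := Points.ext (H.comp_conv N _ _)

end HopfStruct

namespace HopfBrace

open HopfStruct (Points)

variable {k A R R' : Type*} [Field k] [CommRing A] [Algebra k A] [CommRing R] [Algebra k R]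
  [CommRing R'] [Algebra k R'] (HB : HopfBrace k A)

theorem snd_conv_fst_conv (f g h : A →ₐ[k] R) :
    HB.snd.conv f (HB.fst.conv g h) =
      HB.fst.conv (HB.snd.conv f g)
        (HB.fst.conv (f.comp HB.fst.antipodeAlgHom) (HB.snd.conv f h)) := by
  let ev : A ⊗[k] (A ⊗[k] A) →ₐ[k] R := productMap f (productMap g h)
  have lhs (x : A) :
      HB.snd.conv f (HB.fst.conv g h) x = ev (braceLHS k A HB.fst.Δ HB.snd.Δ x) := by
    rw [HopfStruct.conv_apply, braceLHS, LinearMap.comp_apply]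
    induction HB.snd.Δ x using TensorProduct.induction_on with
    | zero => simp
    | tmul a b => simp [ev, HopfStruct.conv_apply]
    | add _ _ h₁ h₂ => simp only [map_add, h₁, h₂]
  have rhs (x : A) : HB.fst.conv (HB.snd.conv f g)
      (HB.fst.conv (f.comp HB.fst.antipodeAlgHom) (HB.snd.conv f h)) x =
      ev (braceRHS k A HB.fst.Δ HB.snd.Δ HB.fst.S x) := by
    let outer : A ⊗[k] (A ⊗[k] A) →ₗ[k] R :=
      LinearMap.mul' k R ∘ₗ TensorProduct.map (HB.snd.conv f g).toLinearMap
        (LinearMap.mul' k R ∘ₗ TensorProduct.map (f.comp HB.fst.antipodeAlgHom).toLinearMap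
          (HB.snd.conv f h).toLinearMap)
    have key : outer = ev.toLinearMap ∘ₗ mul₃ k (A ⊗[k] (A ⊗[k] A)) ∘ₗ
        TensorProduct.map (TensorProduct.map LinearMap.id (ι₁ k A A) ∘ₗ HB.snd.Δ)
        (TensorProduct.map (ι₁ k A (A ⊗[k] A) ∘ₗ HB.fst.S)
          (TensorProduct.map LinearMap.id (ι₂ k A A) ∘ₗ HB.snd.Δ)) :=
      TensorProduct.ext_threefold' fun a b c => by
        simp [outer, ev, mul₃, productMap_map_ι₁, productMap_map_ι₂, HopfStruct.conv_apply]
    calc _ = outer (TensorProduct.map LinearMap.id HB.fst.Δ (HB.fst.Δ x)) := by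
          rw [LinearMap.comp_apply, TensorProduct.map_map, LinearMap.comp_id]; rfl
      _ = _ := congr($key _)
  ext x
  rw [lhs, rhs, HB.compat]

variable (R) in
def skewBrace : SkewBrace (HB.fst.Points R) where
  circ f g := ⟨HB.snd.conv f.toAlgHom g.toAlgHom⟩
  circOne := ⟨HB.snd.convOne⟩
  circInv f := ⟨f.toAlgHom.comp HB.snd.antipodeAlgHom⟩
  circ_assoc _ _ _ := Points.ext (HB.snd.conv_assoc _ _ _)
  circOne_circ _ := Points.ext (HB.snd.convOne_conv _)
  circ_circOne _ := Points.ext (HB.snd.conv_convOne _)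
  circInv_circ _ := Points.ext (HB.snd.antipode_conv _)
  circ_circInv _ := Points.ext (HB.snd.conv_antipode _)
  circ_mul _ _ _ := Points.ext (HB.snd_conv_fst_conv _ _ _)

@[simp] theorem skewBrace_circ_toAlgHom (f g : HB.fst.Points R) :
    ((HB.skewBrace R).circ f g).toAlgHom = HB.snd.conv f.toAlgHom g.toAlgHom := rfl

@[simp] theorem skewBrace_circInv_toAlgHom (f : HB.fst.Points R) :
    ((HB.skewBrace R).circInv f).toAlgHom = f.toAlgHom.comp HB.snd.antipodeAlgHom := rfl

theorem map_skewBrace_circ (N : R →ₐ[k] R') (f g : HB.fst.Points R) :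
    Points.map N ((HB.skewBrace R).circ f g) =
      (HB.skewBrace R').circ (Points.map N f) (Points.map N g) :=
  Points.ext (HB.snd.comp_conv N _ _)

def pairOf (F : A ⊗[k] A →ₐ[k] R) : HB.fst.Points R × HB.fst.Points R :=
  (⟨F.comp includeLeft⟩, ⟨F.comp includeRight⟩)

theorem pairOf_injective : Function.Injective (HB.pairOf (R := R)) := fun _ _ h =>
  Algebra.TensorProduct.ext (congrArg (·.1.toAlgHom) h) (congrArg (·.2.toAlgHom) h)

theorem pairOf_comp (N : R →ₐ[k] R') (F : A ⊗[k] A →ₐ[k] R) :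
    HB.pairOf (N.comp F) = Prod.map (Points.map N) (Points.map N) (HB.pairOf F) :=
  rfl

def ofPair (p : HB.fst.Points R × HB.fst.Points R) : A ⊗[k] A →ₐ[k] R :=
  productMap p.1.toAlgHom p.2.toAlgHom

theorem pairOf_ofPair (p : HB.fst.Points R × HB.fst.Points R) : HB.pairOf (HB.ofPair p) = p :=
  Prod.ext (Points.ext (Algebra.TensorProduct.productMap_left _ _))
    (Points.ext (Algebra.TensorProduct.productMap_right _ _))

def genericPair : HB.fst.Points (A ⊗[k] A) × HB.fst.Points (A ⊗[k] A) :=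
  (⟨includeLeft⟩, ⟨includeRight⟩)

def braiding : A ⊗[k] A →ₐ[k] A ⊗[k] A :=
  HB.ofPair ((HB.skewBrace _).solution HB.genericPair)

def braidingInv : A ⊗[k] A →ₐ[k] A ⊗[k] A :=
  HB.ofPair ((HB.skewBrace _).solution.symm HB.genericPair)

theorem pairOf_comp_braiding (F : A ⊗[k] A →ₐ[k] R) :
    HB.pairOf (F.comp HB.braiding) = (HB.skewBrace R).solution (HB.pairOf F) := by
  rw [pairOf_comp, braiding, pairOf_ofPair,
    (HB.skewBrace _).map_solution _ (HB.map_skewBrace_circ F)]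
  rfl

theorem pairOf_comp_braidingInv (F : A ⊗[k] A →ₐ[k] R) :
    HB.pairOf (F.comp HB.braidingInv) = (HB.skewBrace R).solution.symm (HB.pairOf F) := by
  rw [pairOf_comp, braidingInv, pairOf_ofPair,
    (HB.skewBrace _).map_solution_symm _ (HB.map_skewBrace_circ F)]
  rfl

def braidingEquiv : A ⊗[k] A ≃ₐ[k] A ⊗[k] A :=
  AlgEquiv.ofAlgHom HB.braiding HB.braidingInv
    (HB.pairOf_injective <| by
      rw [pairOf_comp_braidingInv, ← AlgHom.id_comp HB.braiding, pairOf_comp_braiding,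
        Equiv.symm_apply_apply])
    (HB.pairOf_injective <| by
      rw [pairOf_comp_braiding, ← AlgHom.id_comp HB.braidingInv, pairOf_comp_braidingInv,
        Equiv.apply_symm_apply])

def tripleOf (F : (A ⊗[k] A) ⊗[k] A →ₐ[k] R) :
    (HB.fst.Points R × HB.fst.Points R) × HB.fst.Points R :=
  (HB.pairOf (F.comp includeLeft), ⟨F.comp includeRight⟩)

theorem tripleOf_injective : Function.Injective (HB.tripleOf (R := R)) := fun _ _ h =>
  Algebra.TensorProduct.ext (HB.pairOf_injective (congrArg Prod.fst h))
    (congrArg (·.2.toAlgHom) h)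

local notation "assocA" => Algebra.TensorProduct.assoc k k k A A A

def braidingLeft : (A ⊗[k] A) ⊗[k] A →ₐ[k] (A ⊗[k] A) ⊗[k] A :=
  Algebra.TensorProduct.map HB.braiding (AlgHom.id k A)

def braidingRight : (A ⊗[k] A) ⊗[k] A →ₐ[k] (A ⊗[k] A) ⊗[k] A :=
  (assocA).symm.toAlgHom.comp
    ((Algebra.TensorProduct.map (AlgHom.id k A) HB.braiding).comp (assocA).toAlgHom)

theorem tripleOf_comp_braidingLeft (F : (A ⊗[k] A) ⊗[k] A →ₐ[k] R) :
    HB.tripleOf (F.comp HB.braidingLeft) = (HB.skewBrace R).solutionLeft (HB.tripleOf F) := by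
  rw [tripleOf, AlgHom.comp_assoc, braidingLeft, Algebra.TensorProduct.map_comp_includeLeft,
    AlgHom.comp_assoc, Algebra.TensorProduct.map_comp_includeRight, AlgHom.comp_id,
    ← AlgHom.comp_assoc, pairOf_comp_braiding]
  rfl

theorem tripleOf_comp_braidingRight (F : (A ⊗[k] A) ⊗[k] A →ₐ[k] R) :
    HB.tripleOf (F.comp HB.braidingRight) = (HB.skewBrace R).solutionRight (HB.tripleOf F) := by
  let tail : A ⊗[k] A →ₐ[k] (A ⊗[k] A) ⊗[k] A := (assocA).symm.toAlgHom.comp includeRight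
  have h := HB.pairOf_comp_braiding (F.comp tail)
  have h_tail : HB.pairOf (F.comp tail) = ((HB.tripleOf F).1.2, (HB.tripleOf F).2) :=
    Prod.ext (Points.ext <| AlgHom.ext fun x => by simp [tail, pairOf, tripleOf])
      (Points.ext <| AlgHom.ext fun x => by
        simp [tail, pairOf, tripleOf, Algebra.TensorProduct.one_def])
  rw [h_tail] at h
  simp only [SkewBrace.solutionRight, ← h]
  refine Prod.ext (Prod.ext ?_ ?_) ?_ <;> refine Points.ext (AlgHom.ext fun x => ?_)
  · simp [tripleOf, pairOf, braidingRight, ← Algebra.TensorProduct.one_def]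
    rfl
  · simp [tripleOf, pairOf, tail, braidingRight]
  · simp [tripleOf, pairOf, tail, braidingRight, Algebra.TensorProduct.one_def]

theorem braiding_braid :
    HB.braidingLeft.comp (HB.braidingRight.comp HB.braidingLeft) =
      HB.braidingRight.comp (HB.braidingLeft.comp HB.braidingRight) := by
  apply HB.tripleOf_injective
  have hL := HB.tripleOf_comp_braidingLeft (AlgHom.id k _)
  have hR := HB.tripleOf_comp_braidingRight (AlgHom.id k _)
  rw [AlgHom.id_comp] at hL hR
  rw [← AlgHom.comp_assoc, tripleOf_comp_braidingLeft, tripleOf_comp_braidingRight, hL,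
    ← AlgHom.comp_assoc, tripleOf_comp_braidingRight, tripleOf_comp_braidingLeft, hR]
  exact (HB.skewBrace _).solution_braid _

theorem toLinearMap_lam_genericPair :
    ((HB.skewBrace _).lam HB.genericPair.1 HB.genericPair.2).toAlgHom.toLinearMap =
      ρmap k A HB.fst.Δ HB.snd.Δ HB.fst.S := by
  simp only [SkewBrace.lam, Points.mul_toAlgHom, Points.inv_toAlgHom,
    skewBrace_circ_toAlgHom, genericPair, HB.snd.conv_includeLeft_includeRight]
  rfl

theorem toLinearMap_sigma_genericPair :
    ((HB.skewBrace _).sigma HB.genericPair.1 HB.genericPair.2).toAlgHom.toLinearMap =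
      φmap k A HB.fst.Δ HB.snd.Δ HB.fst.S HB.snd.S := by
  rw [SkewBrace.sigma]
  simp only [skewBrace_circ_toAlgHom, skewBrace_circInv_toAlgHom]
  rw [genericPair, HB.snd.conv_includeLeft_includeRight, ← genericPair]
  ext x
  simp only [φmap, LinearMap.comp_apply]
  rw [TensorProduct.map_map, LinearMap.comp_id, ← toLinearMap_lam_genericPair]
  rfl

theorem toLinearMap_braiding :
    HB.braiding.toLinearMap = cmap k A HB.fst.Δ HB.snd.Δ HB.fst.S HB.snd.S := by
  rw [braiding, ofPair, Algebra.TensorProduct.productMap_eq_comp_map, AlgHom.comp_toLinearMap,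
    Algebra.TensorProduct.lmul'_toLinearMap, Algebra.TensorProduct.toLinearMap_map, cmap,
    ← toLinearMap_lam_genericPair, ← toLinearMap_sigma_genericPair]
  rfl

theorem toLinearMap_braidingLeft : HB.braidingLeft.toLinearMap =
    TensorProduct.map (cmap k A HB.fst.Δ HB.snd.Δ HB.fst.S HB.snd.S) LinearMap.id := by
  rw [braidingLeft, Algebra.TensorProduct.toLinearMap_map, toLinearMap_braiding]
  rfl

theorem toLinearMap_braidingRight : HB.braidingRight.toLinearMap =
    (TensorProduct.assoc k A A A).symm.toLinearMap ∘ₗ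
      TensorProduct.map LinearMap.id (cmap k A HB.fst.Δ HB.snd.Δ HB.fst.S HB.snd.S) ∘ₗ
        (TensorProduct.assoc k A A A).toLinearMap := by
  rw [← toLinearMap_braiding]
  refine TensorProduct.ext_threefold fun a b c => ?_
  simp [braidingRight]
  rfl

end HopfBrace

/-- Proposition 2.9.  Let `(A, Δ, Δ')` be a commutative Hopf
brace, with `ρ(x) = S(x_1) x_{21'} ⊗ x_{22'}` and
`φ(y) = (T(y_{1'}))_{(-1)} y_{2'} ⊗ (T(y_{1'}))_{(0)} y_{3'}`.  Then the linear
map `c : A ⊗ A → A ⊗ A`, `c(x ⊗ y) = x_{(-1)} y_{[0]} ⊗ x_{(0)} y_{[1]}`, is an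
invertible solution of the braid equation
`(c ⊗ id)(id ⊗ c)(c ⊗ id) = (id ⊗ c)(c ⊗ id)(id ⊗ c)` on `A ⊗ A ⊗ A`. -/
theorem proposition_2_9 {k : Type*} [Field k] {A : Type*} [Ring A] [Algebra k A]
    (HB : HopfBrace k A) (hcomm : ∀ x y : A, x * y = y * x) :
    Function.Bijective
      (cmap k A HB.fst.Δ HB.snd.Δ HB.fst.S HB.snd.S) ∧
    (∀ z : (A ⊗[k] A) ⊗[k] A,
      TensorProduct.map (cmap k A HB.fst.Δ HB.snd.Δ HB.fst.S HB.snd.S)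
          (LinearMap.id : A →ₗ[k] A)
        ((TensorProduct.assoc k A A A).symm
          (TensorProduct.map (LinearMap.id : A →ₗ[k] A)
              (cmap k A HB.fst.Δ HB.snd.Δ HB.fst.S HB.snd.S)
            (TensorProduct.assoc k A A A
              (TensorProduct.map (cmap k A HB.fst.Δ HB.snd.Δ HB.fst.S HB.snd.S)
                (LinearMap.id : A →ₗ[k] A) z))))
      = (TensorProduct.assoc k A A A).symm
          (TensorProduct.map (LinearMap.id : A →ₗ[k] A)
              (cmap k A HB.fst.Δ HB.snd.Δ HB.fst.S HB.snd.S)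
            (TensorProduct.assoc k A A A
              (TensorProduct.map (cmap k A HB.fst.Δ HB.snd.Δ HB.fst.S HB.snd.S)
                  (LinearMap.id : A →ₗ[k] A)
                ((TensorProduct.assoc k A A A).symm
                  (TensorProduct.map (LinearMap.id : A →ₗ[k] A)
                      (cmap k A HB.fst.Δ HB.snd.Δ HB.fst.S HB.snd.S)
                    (TensorProduct.assoc k A A A z))))))) := by
  let : CommRing A := { ‹Ring A› with mul_comm := hcomm }
  refine ⟨?_, fun z => ?_⟩
  · rw [← HB.toLinearMap_braiding]
    exact HB.braidingEquiv.bijective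
  · have h := congr($(congrArg AlgHom.toLinearMap HB.braiding_braid) z)
    simp only [AlgHom.comp_toLinearMap, HB.toLinearMap_braidingLeft,
      HB.toLinearMap_braidingRight, LinearMap.comp_apply, LinearEquiv.coe_coe] at h
    exact h

end HopfPaper
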